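/- Let n ≥ 2, let Δⁿ be the open unit simplex in ℝⁿ, let α ∈ (−∞, 1) with α ≠ 0, and let φ(p) := (1/α) log( Σ_{j=0}^{n−1} p_j^α ), a smooth function on Δⁿ (extended by the same formula to the open positive orthant). Then for every p ∈ Δⁿ: (i) the portfolio map is the diversity-weighted portfolio, π_φ(p) = α ⊗ p, i.e. π_φ(p)_i = p_i^α / Σ_j p_j^α; and (ii) the transport map is the dilation T_φ(p) = (1 − α) ⊗ p, i.e. T_φ(p)_i = p_i^{1−α} / Σ_j p_j^{1−α}. -/

import Mathlib

open Real Set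
open scoped RealInnerProductSpace

/-- The open unit simplex `Δⁿ = {p ∈ (0,1)ⁿ : Σ_i p_i = 1}`. -/
def simplexOpen (n : ℕ) : Set (EuclideanSpace ℝ (Fin n)) :=
  {p | (∀ i, p i ∈ Set.Ioo (0 : ℝ) 1) ∧ ∑ i, p i = 1}

/-- Perturbation (Aitchison addition): `(p ⊕ q)_i = p_i q_i / Σ_j p_j q_j`. -/
noncomputable def oplus {n : ℕ} (p q : EuclideanSpace ℝ (Fin n)) :
    EuclideanSpace ℝ (Fin n) :=
  WithLp.toLp 2 (fun i => p i * q i / ∑ j, p j * q j)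

/-- Powering (Aitchison scalar action): `(α ⊗ p)_i = p_i^α / Σ_j p_j^α`. -/
noncomputable def opow {n : ℕ} (α : ℝ) (p : EuclideanSpace ℝ (Fin n)) :
    EuclideanSpace ℝ (Fin n) :=
  WithLp.toLp 2 (fun i => p i ^ α / ∑ j, p j ^ α)

/-- Aitchison inverse `⊖p = (−1) ⊗ p`. -/
noncomputable def ominus {n : ℕ} (p : EuclideanSpace ℝ (Fin n)) :
    EuclideanSpace ℝ (Fin n) :=
  opow (-1) p

/-- Directional derivative `∇̃_i f(p) = ⟨∇f(p), e_i − p⟩`. -/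
noncomputable def tgrad {n : ℕ} (f : EuclideanSpace ℝ (Fin n) → ℝ)
    (p : EuclideanSpace ℝ (Fin n)) (i : Fin n) : ℝ :=
  ⟪gradient f p, EuclideanSpace.single i (1 : ℝ) - p⟫

/-- Portfolio map `π_φ(p)_i = p_i (1 + ∇̃_i φ(p))`. -/
noncomputable def portfolio {n : ℕ} (φ : EuclideanSpace ℝ (Fin n) → ℝ)
    (p : EuclideanSpace ℝ (Fin n)) : EuclideanSpace ℝ (Fin n) :=
  WithLp.toLp 2 (fun i => p i * (1 + tgrad φ p i))

/-- Transport map `T_φ(p) = p ⊕ π_φ(⊖p)`. -/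
noncomputable def transport {n : ℕ} (φ : EuclideanSpace ℝ (Fin n) → ℝ)
    (p : EuclideanSpace ℝ (Fin n)) : EuclideanSpace ℝ (Fin n) :=
  oplus p (portfolio φ (ominus p))

/-
For `φ = α⁻¹ log Σ_j p_j^α` the gradient is `p_i^(α-1) / Σ_j p_j^α`, whose inner product
with `p` is `1`; hence `∇̃_i φ(p) = p_i^(α-1) / Σ_j p_j^α - 1` and `π_φ(p) = α ⊗ p` at every point
with positive coordinates. The transport map is then computed in the Aitchison calculus:
`T_φ(p) = p ⊕ (α ⊗ ((-1) ⊗ p)) = p ⊕ ((-α) ⊗ p) = (1 - α) ⊗ p`.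
-/

noncomputable def diversityPotential {n : ℕ} (α : ℝ) (p : EuclideanSpace ℝ (Fin n)) : ℝ :=
  (1 / α) * Real.log (∑ j, p j ^ α)

section Positive

variable {n : ℕ} [NeZero n] {p : EuclideanSpace ℝ (Fin n)}

lemma sum_rpow_pos (hp : ∀ i, 0 < p i) (β : ℝ) : 0 < ∑ j, p j ^ β :=
  Finset.sum_pos (fun j _ => Real.rpow_pos_of_pos (hp j) β) Finset.univ_nonempty

lemma opow_pos (hp : ∀ i, 0 < p i) (β : ℝ) (i : Fin n) : 0 < opow β p i :=
  div_pos (Real.rpow_pos_of_pos (hp i) β) (sum_rpow_pos hp β)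

lemma opow_opow (hp : ∀ i, 0 < p i) (β γ : ℝ) : opow β (opow γ p) = opow (γ * β) p := by
  have hS := sum_rpow_pos hp γ
  have hpow : ∀ k, opow γ p k ^ β = p k ^ (γ * β) / (∑ j, p j ^ γ) ^ β := fun k => by
    rw [opow, PiLp.toLp_apply, Real.div_rpow (Real.rpow_nonneg (hp k).le _) hS.le,
      ← Real.rpow_mul (hp k).le]
  ext i
  simp only [opow, PiLp.toLp_apply] at hpow ⊢
  rw [hpow, Finset.sum_congr rfl fun k _ => hpow k, ← Finset.sum_div,
    div_div_div_cancel_right₀ (Real.rpow_pos_of_pos hS β).ne']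

lemma oplus_opow_self (hp : ∀ i, 0 < p i) (β : ℝ) : oplus p (opow β p) = opow (1 + β) p := by
  have hmul : ∀ k, p k * opow β p k = p k ^ (1 + β) / ∑ j, p j ^ β := fun k => by
    rw [opow, PiLp.toLp_apply, mul_div_assoc', Real.rpow_add (hp k), Real.rpow_one]
  ext i
  simp only [oplus, opow, PiLp.toLp_apply] at hmul ⊢
  rw [hmul, Finset.sum_congr rfl fun k _ => hmul k, ← Finset.sum_div,
    div_div_div_cancel_right₀ (sum_rpow_pos hp β).ne']

end Positive

lemma tgrad_eq_of_hasGradientAt {n : ℕ} {f : EuclideanSpace ℝ (Fin n) → ℝ}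
    {g p : EuclideanSpace ℝ (Fin n)} (hf : HasGradientAt f g p) (i : Fin n) :
    tgrad f p i = g i - ⟪g, p⟫ := by
  rw [tgrad, hf.gradient, inner_sub_right, EuclideanSpace.inner_single_right, conj_trivial,
    one_mul]

lemma hasGradientAt_diversityPotential {n : ℕ} {α : ℝ} (hα : α ≠ 0)
    {p : EuclideanSpace ℝ (Fin n)} (hp : ∀ i, 0 < p i) (hS : ∑ j, p j ^ α ≠ 0) :
    HasGradientAt (diversityPotential α)
      (WithLp.toLp 2 fun i => p i ^ (α - 1) / ∑ j, p j ^ α) p := by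
  have hterm : ∀ j : Fin n, HasFDerivAt (fun q : EuclideanSpace ℝ (Fin n) => q j ^ α)
      ((α * p j ^ (α - 1)) • (EuclideanSpace.proj j : EuclideanSpace ℝ (Fin n) →L[ℝ] ℝ)) p :=
    fun j => (EuclideanSpace.proj j).hasFDerivAt.rpow_const (Or.inl (hp j).ne')
  have hφ : HasFDerivAt (diversityPotential α) _ p :=
    ((HasFDerivAt.fun_sum fun j _ => hterm j).log hS).const_mul (1 / α)
  rw [hasGradientAt_iff_hasFDerivAt]
  refine hφ.congr_fderiv ?_
  ext v
  simp only [one_div, smul_apply, sum_apply, PiLp.proj_apply, smul_eq_mul, Finset.mul_sum,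
    InnerProductSpace.toDual_apply_apply, PiLp.inner_apply, RCLike.inner_apply, conj_trivial]
  refine Finset.sum_congr rfl fun j _ => ?_
  field_simp

lemma portfolio_diversityPotential {n : ℕ} [NeZero n] {α : ℝ} (hα : α ≠ 0)
    {p : EuclideanSpace ℝ (Fin n)} (hp : ∀ i, 0 < p i) :
    portfolio (diversityPotential α) p = opow α p := by
  have hS := sum_rpow_pos hp α
  have hgrad := hasGradientAt_diversityPotential hα hp hS.ne'
  have hmul : ∀ k, p k * (p k ^ (α - 1) / ∑ j, p j ^ α) = p k ^ α / ∑ j, p j ^ α := fun k => by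
    rw [mul_div_assoc', mul_comm, ← Real.rpow_add_one (hp k).ne', sub_add_cancel]
  have hinner : ⟪WithLp.toLp 2 fun i => p i ^ (α - 1) / ∑ j, p j ^ α, p⟫ = 1 := by
    simp only [PiLp.inner_apply, RCLike.inner_apply, conj_trivial, hmul]
    rw [← Finset.sum_div, div_self hS.ne']
  ext i
  simp only [portfolio, opow, PiLp.toLp_apply, tgrad_eq_of_hasGradientAt hgrad, hinner]
  rw [add_sub_cancel, hmul]

lemma transport_diversityPotential {n : ℕ} [NeZero n] {α : ℝ} (hα : α ≠ 0)
    {p : EuclideanSpace ℝ (Fin n)} (hp : ∀ i, 0 < p i) :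
    transport (diversityPotential α) p = opow (1 - α) p := by
  rw [transport, ominus, portfolio_diversityPotential hα (opow_pos hp (-1)), opow_opow hp,
    oplus_opow_self hp, neg_one_mul, sub_eq_add_neg]

theorem stmt_18_general (n : ℕ) (α : ℝ) (hα0 : α ≠ 0)
    (φ : EuclideanSpace ℝ (Fin n) → ℝ)
    (hφ : φ = fun p => (1 / α) * Real.log (∑ j, p j ^ α)) :
    ∀ p ∈ simplexOpen n,
      (portfolio φ p = opow α p ∧ ∀ i, portfolio φ p i = p i ^ α / ∑ j, p j ^ α) ∧
      (transport φ p = opow (1 - α) p ∧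
        ∀ i, transport φ p i = p i ^ (1 - α) / ∑ j, p j ^ (1 - α)) := by
  obtain rfl : φ = diversityPotential α := hφ
  rintro p ⟨hp01, hsum⟩
  have : NeZero n := ⟨by rintro rfl; simp at hsum⟩
  have hp : ∀ i, 0 < p i := fun i => (hp01 i).1
  have hport := portfolio_diversityPotential hα0 hp
  have htrans := transport_diversityPotential hα0 hp
  exact ⟨⟨hport, fun i => by rw [hport]; rfl⟩, ⟨htrans, fun i => by rw [htrans]; rfl⟩⟩

/-- for `φ(p) = (1/α)log(Σ_j p_j^α)` with `α < 1`, `α ≠ 0`, the portfolio map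
is the diversity-weighted portfolio `α ⊗ p` and the transport map is the dilation
`(1 − α) ⊗ p` on the open simplex. -/
theorem stmt_18 (n : ℕ) (hn : 2 ≤ n) (α : ℝ) (hα1 : α < 1) (hα0 : α ≠ 0)
    (φ : EuclideanSpace ℝ (Fin n) → ℝ)
    (hφ : φ = fun p => (1 / α) * Real.log (∑ j, p j ^ α)) :
    ∀ p ∈ simplexOpen n,
      (portfolio φ p = opow α p ∧ ∀ i, portfolio φ p i = p i ^ α / ∑ j, p j ^ α) ∧
      (transport φ p = opow (1 - α) p ∧
        ∀ i, transport φ p i = p i ^ (1 - α) / ∑ j, p j ^ (1 - α)) :=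
  stmt_18_general n α hα0 φ hφ
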